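/- For every integer a > 1 and every integer r > 2 with (a, r) ≠ (2, 6), there exists a prime p such that p divides a^r - 1 but p does not divide a^k - 1 for any integer k with 1 ≤ k < r. -/

import Mathlib

/-!
Let `Φ = Φ_r(a)`. For a prime `q ∣ Φ` the order of `a` modulo `q` is the `q`-free part `m` of
`r`, and `m ∣ q - 1`. If `q` is not a primitive divisor then `m < r`, so `q ∣ r`, and `m < q`
makes `q` the largest prime factor of `r`. Hence `Φ` is a power of that single prime, and lifting
the exponent in `Φ ∣ (b ^ q - 1) / (b - 1)`, `b = a ^ (r / q)`, gives `q² ∤ Φ`, so `Φ = q`.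
This contradicts `Φ > (a - 1) ^ φ(r) ≥ 2 ^ (q - 1)` when `a ≥ 3`. For `a = 2`, if `q² ∣ r` then
`Φ = Φ_{qm}(2 ^ (r / (q m)))` and the same bound applies; otherwise
`Φ = Φ_m(2 ^ q) / Φ_m(2) > ((2 ^ q - 1) / 3) ^ φ(m)`, which is large unless `m ≤ 2`,
and `m ≤ 2` leaves only `(a, r) = (2, 6)`.
-/

open Polynomial

theorem ZMod.natCast_pow_eq_one_iff_dvd {p a k : ℕ} (ha : 0 < a) :
    (a : ZMod p) ^ k = 1 ↔ p ∣ a ^ k - 1 := by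
  rw [← Nat.modEq_iff_dvd' (Nat.one_le_pow _ _ ha), ← ZMod.natCast_eq_natCast_iff, eq_comm]
  push_cast
  rfl

theorem orderOf_eq_ordCompl_of_dvd_cyclotomic_eval {p n : ℕ} [hp : Fact p.Prime] (hn : n ≠ 0)
    {a : ℤ} (h : (p : ℤ) ∣ (cyclotomic n ℤ).eval a) : orderOf (a : ZMod p) = ordCompl[p] n := by
  have : NeZero ((ordCompl[p] n : ℕ) : ZMod p) :=
    ⟨by rw [Ne, ZMod.natCast_eq_zero_iff]; exact Nat.not_dvd_ordCompl hp.out hn⟩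
  have hroot : (cyclotomic (ordProj[p] n * ordCompl[p] n) (ZMod p)).IsRoot (a : ZMod p) := by
    rwa [Nat.ordProj_mul_ordCompl_eq_self, IsRoot.def, ← map_cyclotomic_int, eval_intCast_map,
      eq_intCast, ZMod.intCast_zmod_eq_zero_iff_dvd]
  exact (isRoot_cyclotomic_prime_pow_mul_iff_of_charP.mp hroot).eq_orderOf.symm

theorem ordCompl_lt_of_dvd_cyclotomic_eval {p n : ℕ} [hp : Fact p.Prime] (hn : n ≠ 0) {a : ℤ}
    (h : (p : ℤ) ∣ (cyclotomic n ℤ).eval a) : ordCompl[p] n < p := by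
  have hord := orderOf_eq_ordCompl_of_dvd_cyclotomic_eval hn h
  have hpos := Nat.ordCompl_pos p hn
  have ha : (a : ZMod p) ≠ 0 := fun h0 => by
    have h1 := pow_orderOf_eq_one (a : ZMod p)
    rw [hord, h0, zero_pow hpos.ne'] at h1
    exact zero_ne_one h1
  have hdvd := ZMod.orderOf_dvd_card_sub_one ha
  rw [hord] at hdvd
  have := Nat.le_of_dvd (Nat.sub_pos_of_lt hp.out.one_lt) hdvd
  omega

theorem dvd_of_dvd_cyclotomic_eval_of_pow_eq_one {p n k : ℕ} [Fact p.Prime] (hn : n ≠ 0) {a : ℤ}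
    (h : (p : ℤ) ∣ (cyclotomic n ℤ).eval a) (hk : 0 < k) (hkn : k < n)
    (hak : (a : ZMod p) ^ k = 1) : p ∣ n := by
  have hle : ordCompl[p] n ≤ k := by
    rw [← orderOf_eq_ordCompl_of_dvd_cyclotomic_eval hn h]
    exact Nat.le_of_dvd hk (orderOf_dvd_of_pow_eq_one hak)
  refine Nat.dvd_of_factorization_pos fun hv => ?_
  rw [hv, pow_zero, Nat.div_one] at hle
  omega

theorem Nat.Prime.le_of_ordCompl_lt {p q n : ℕ} (hp : p.Prime) (hq : q.Prime) (hn : n ≠ 0)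
    (hqn : q ∣ n) (h : ordCompl[p] n < p) : q ≤ p := by
  rcases eq_or_ne q p with rfl | hqp
  · rfl
  have hdvd : q ∣ ordCompl[p] n :=
    Nat.dvd_ordCompl_of_dvd_not_dvd hqn fun hpq =>
      hqp ((Nat.prime_dvd_prime_iff_eq hp hq).mp hpq).symm
  exact (Nat.le_of_dvd (Nat.ordCompl_pos p hn) hdvd).trans h.le

theorem Nat.dvd_of_forall_prime_dvd_eq_of_not_sq_dvd {n p : ℕ} (hn : n ≠ 0)
    (h : ∀ d, d.Prime → d ∣ n → d = p) (hsq : ¬ p ^ 2 ∣ n) : n ∣ p := by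
  rw [Nat.eq_prime_pow_of_unique_prime_dvd hn fun hd hdn => h _ hd hdn] at hsq ⊢
  conv_rhs => rw [← pow_one p]
  exact pow_dvd_pow p (by by_contra! hk; exact hsq (pow_dvd_pow p hk))

theorem cyclotomic_dvd_geom_sum_X_pow_div {R : Type*} [CommRing R] [IsDomain R] {q n : ℕ}
    (hq : 1 < q) (hqn : q ∣ n) (hn : n ≠ 0) :
    cyclotomic n R ∣ ∑ i ∈ Finset.range q, (X ^ (n / q)) ^ i := by
  have hd : n / q ∈ n.properDivisors :=
    Nat.mem_properDivisors.mpr ⟨Nat.div_dvd_of_dvd hqn, Nat.div_lt_self (Nat.pos_of_ne_zero hn) hq⟩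
  have hsplit :
      (X : R[X]) ^ n - 1 = (X ^ (n / q) - 1) * ∑ i ∈ Finset.range q, (X ^ (n / q)) ^ i := by
    rw [mul_comm, geom_sum_mul, ← pow_mul, Nat.div_mul_cancel hqn]
  have h := X_pow_sub_one_mul_cyclotomic_dvd_X_pow_sub_one_of_dvd R hd
  rw [hsplit] at h
  have hpos : 0 < n / q := Nat.div_pos (Nat.le_of_dvd (Nat.pos_of_ne_zero hn) hqn) (by omega)
  exact (mul_dvd_mul_iff_left (by simpa using X_pow_sub_C_ne_zero hpos (1 : R))).mp h

theorem not_sq_dvd_cyclotomic_eval {q n : ℕ} (hq : q.Prime) (hqn : q ∣ n) (hn : 2 < n) (a : ℤ) :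
    ¬ (q : ℤ) ^ 2 ∣ (cyclotomic n ℤ).eval a := by
  have := Fact.mk hq
  intro hsq
  have hdvd : (q : ℤ) ∣ (cyclotomic n ℤ).eval a := (dvd_pow_self _ two_ne_zero).trans hsq
  have hord := orderOf_eq_ordCompl_of_dvd_cyclotomic_eval (by omega) hdvd
  have hS : (q : ℤ) ^ 2 ∣ ∑ i ∈ Finset.range q, (a ^ (n / q)) ^ i := hsq.trans <| by
    simpa [eval_finsetSum] using
      eval_dvd (x := a) (cyclotomic_dvd_geom_sum_X_pow_div hq.one_lt hqn (by omega))
  have hb : (q : ℤ) ∣ a ^ (n / q) - 1 := by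
    rw [← ZMod.intCast_zmod_eq_zero_iff_dvd]
    push_cast
    rw [sub_eq_zero, ← orderOf_dvd_iff_pow_eq_one, hord]
    refine (Nat.coprime_ordCompl hq (by omega)).symm.dvd_of_dvd_mul_left ?_
    rw [Nat.mul_div_cancel' hqn]
    exact Nat.ordCompl_dvd n q
  rcases hq.eq_two_or_odd' with rfl | hodd
  · -- `n` is a power of two, so `a ^ (n / 2)` is an odd square, i.e. `≡ 1 mod 4`
    have hm : ordCompl[2] n = 1 := by
      have := ordCompl_lt_of_dvd_cyclotomic_eval (by omega) hdvd
      have := Nat.ordCompl_pos 2 (show n ≠ 0 by omega)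
      omega
    have h4 : 4 ∣ n := by
      have hn2 := Nat.ordProj_mul_ordCompl_eq_self n 2
      rw [hm, mul_one] at hn2
      rw [← hn2, show 4 = 2 ^ 2 by rfl]
      refine pow_dvd_pow 2 ?_
      by_contra! hv
      interval_cases h : n.factorization 2 <;> omega
    have hsq : a ^ (n / 2) = (a ^ (n / 4)) ^ 2 := by
      rw [← pow_mul]; congr 1; omega
    rw [hsq] at hb hS
    obtain ⟨k, hk⟩ | hodd := Int.even_or_odd (a ^ (n / 4))
    · rw [hk] at hb
      ring_nf at hb
      omega
    have := Int.sq_mod_four_eq_one_of_odd hodd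
    simp only [Finset.sum_range_succ, Finset.sum_range_zero, pow_zero, pow_one, zero_add] at hS
    omega
  · have hbq : ¬ (q : ℤ) ∣ a ^ (n / q) := fun h =>
      (Nat.prime_iff_prime_int.mp hq).not_dvd_one (by simpa using dvd_sub h hb)
    have hmult := emultiplicity_geom_sum₂_eq_one (Nat.prime_iff_prime_int.mp hq) hodd
      (x := a ^ (n / q)) (y := 1) (by simpa using hb) hbq
    simp only [one_pow, mul_one] at hmult
    rw [← Nat.cast_one] at hmult
    exact (emultiplicity_eq_coe.mp hmult).2 hS

theorem lt_natAbs_cyclotomic_eval_of_prime_dvd {q n x : ℕ} (hq : q.Prime) (hqn : q ∣ n)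
    (hn : n ≠ 0) (hx : 3 ≤ x) : q < ((cyclotomic n ℤ).eval (x : ℤ)).natAbs := by
  have htot : q - 1 ≤ n.totient := by
    have h := Nat.totient_dvd_of_dvd hqn
    rw [Nat.totient_prime hq] at h
    exact Nat.le_of_dvd (Nat.totient_pos.mpr (Nat.pos_of_ne_zero hn)) h
  calc q ≤ 2 ^ (q - 1) := by have := Nat.lt_two_pow_self (n := q - 1); have := hq.pos; omega
    _ ≤ 2 ^ n.totient := Nat.pow_le_pow_right two_pos htot
    _ ≤ (x - 1) ^ n.totient := Nat.pow_le_pow_left (by omega) _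
    _ < _ := sub_one_pow_totient_lt_natAbs_cyclotomic_eval
      (hq.one_lt.trans_le (Nat.le_of_dvd (Nat.pos_of_ne_zero hn) hqn)) (by omega)

theorem three_mul_add_one_le_two_pow {q : ℕ} (hq : 5 ≤ q) : 3 * q + 1 ≤ 2 ^ q := by
  induction q, hq using Nat.le_induction with
  | base => norm_num
  | succ n hn ih => rw [pow_succ]; omega

theorem lt_cyclotomic_eval_two_prime_mul {q m : ℕ} (hq : q.Prime) (hq5 : 5 ≤ q) (hqm : ¬ q ∣ m)
    (hm : 3 ≤ m) : (q : ℝ) < (cyclotomic (q * m) ℝ).eval 2 := by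
  have hexp := congrArg (eval (2 : ℝ)) (cyclotomic_expand_eq_cyclotomic_mul hq hqm ℝ)
  rw [expand_eval, eval_mul, mul_comm m] at hexp
  have ht : 2 ≤ m.totient := by
    obtain ⟨s, hs⟩ := Nat.totient_even (by omega : 2 < m)
    have := Nat.totient_pos.mpr (by omega : 0 < m)
    omega
  have hlow := sub_one_pow_totient_lt_cyclotomic_eval (n := m) (q := 2 ^ q) (by omega)
    (one_lt_pow₀ one_lt_two (by omega))
  have hup : (cyclotomic m ℝ).eval 2 < 3 ^ m.totient := by
    simpa [two_add_one_eq_three] using cyclotomic_eval_lt_add_one_pow_totient hm one_lt_two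
  have h3q : (3 * q : ℝ) ≤ 2 ^ q - 1 := by
    have := three_mul_add_one_le_two_pow hq5
    have : (3 * q + 1 : ℝ) ≤ 2 ^ q := by exact_mod_cast this
    linarith
  have hqq : (q : ℝ) < q ^ m.totient := lt_self_pow₀ (by exact_mod_cast hq.one_lt) (by omega)
  by_contra! hle
  have := cyclotomic_pos' m (R := ℝ) one_lt_two
  have : ((2 : ℝ) ^ q - 1) ^ m.totient < (3 * q) ^ m.totient := calc
    ((2 : ℝ) ^ q - 1) ^ m.totient < (cyclotomic m ℝ).eval (2 ^ q) := hlow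
    _ = (cyclotomic (q * m) ℝ).eval 2 * (cyclotomic m ℝ).eval 2 := hexp
    _ ≤ q * 3 ^ m.totient := by gcongr
    _ < q ^ m.totient * 3 ^ m.totient := by gcongr
    _ = (3 * q) ^ m.totient := by ring
  exact this.not_ge (by gcongr)

theorem eval_cyclotomic_prime_pow_mul {R : Type*} [CommRing R] {q n : ℕ} (hq : q.Prime)
    (hqn : q ∣ n) (j : ℕ) (x : R) :
    (cyclotomic (q ^ j * n) R).eval x = (cyclotomic n R).eval (x ^ q ^ j) := by
  induction j generalizing x with
  | zero => simp
  | succ i ih =>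
    rw [pow_succ, mul_right_comm, ← cyclotomic_expand_eq_cyclotomic hq (hqn.mul_left _),
      expand_eval, ih, ← pow_mul, mul_comm]

theorem lt_natAbs_cyclotomic_eval_two {q r : ℕ} (hq : q.Prime) (hqr : q ∣ r) (hr : r ≠ 0)
    (h6 : r ≠ 6) (hdvd : (q : ℤ) ∣ (cyclotomic r ℤ).eval 2) :
    q < ((cyclotomic r ℤ).eval 2).natAbs := by
  have := Fact.mk hq
  obtain ⟨m, hm⟩ : ∃ m, ordCompl[q] r = m := ⟨_, rfl⟩
  have hord : orderOf (2 : ZMod q) = m := by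
    simpa [hm] using orderOf_eq_ordCompl_of_dvd_cyclotomic_eval hr hdvd
  have hmq : m < q := hm ▸ ordCompl_lt_of_dvd_cyclotomic_eval hr hdvd
  have hm0 : 0 < m := hm ▸ Nat.ordCompl_pos q hr
  have hqm : ¬ q ∣ m := fun h => (Nat.le_of_dvd hm0 h).not_gt hmq
  have hq2m : q ∣ 2 ^ m - 1 :=
    (ZMod.natCast_pow_eq_one_iff_dvd two_pos).mp <| by
      simpa [hord] using pow_orderOf_eq_one (2 : ZMod q)
  obtain ⟨w, hw⟩ := Nat.exists_eq_add_one_of_ne_zero (hq.factorization_pos_of_dvd hr hqr).ne'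
  have hr_eq : r = q ^ w * (q * m) := by
    rw [← mul_assoc, ← pow_succ, ← hw, ← hm, Nat.ordProj_mul_ordCompl_eq_self]
  rcases Nat.eq_zero_or_pos w with rfl | hw0
  · rw [pow_zero, one_mul] at hr_eq
    have hm3 : 3 ≤ m := by
      by_contra!
      interval_cases m
      · exact hq.one_lt.ne' (Nat.dvd_one.mp hq2m)
      · exact h6 (by rw [hr_eq, (Nat.prime_dvd_prime_iff_eq hq Nat.prime_three).mp hq2m])
    have hq4 : q ≠ 4 := by rintro rfl; exact absurd hq (by decide)
    have hq5 : 5 ≤ q := by omega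
    have hlt := lt_cyclotomic_eval_two_prime_mul hq hq5 hqm hm3
    rw [← hr_eq, ← map_cyclotomic_int, eval_map, eval₂_at_ofNat, eq_intCast] at hlt
    have : (q : ℤ) < (cyclotomic r ℤ).eval 2 := by exact_mod_cast hlt
    omega
  · rw [hr_eq, eval_cyclotomic_prime_pow_mul hq (dvd_mul_right q m)]
    have h4 : 4 ≤ 2 ^ q ^ w := by
      calc 4 = 2 ^ 2 := rfl
        _ ≤ 2 ^ q ^ w := Nat.pow_le_pow_right two_pos
          (hq.two_le.trans (Nat.le_self_pow hw0.ne' q))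
    exact_mod_cast lt_natAbs_cyclotomic_eval_of_prime_dvd hq (dvd_mul_right q m)
      (mul_pos hq.pos hm0).ne' (x := 2 ^ q ^ w) (by omega)

/-- Zsigmondy's theorem for `r > 2`. -/
theorem stmt_2 (a r : ℕ) (ha : 1 < a) (hr : 2 < r) (h : (a, r) ≠ (2, 6)) :
    ∃ p : ℕ, p.Prime ∧ p ∣ a ^ r - 1 ∧ ∀ k : ℕ, 1 ≤ k → k < r → ¬ p ∣ a ^ k - 1 := by
  by_contra! hcon
  set Φ := (cyclotomic r ℤ).eval (a : ℤ)
  have hΦ : 1 < Φ.natAbs := by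
    have := sub_one_lt_natAbs_cyclotomic_eval (n := r) (by omega) ha.ne'
    omega
  have hΦdvd : Φ.natAbs ∣ a ^ r - 1 := by
    rw [← Int.natCast_dvd_natCast, Int.natCast_natAbs, abs_dvd,
      Nat.cast_sub (Nat.one_le_pow _ _ (by omega))]
    simpa using eval_dvd (x := (a : ℤ)) (cyclotomic.dvd_X_pow_sub_one r ℤ)
  have hfactor : ∀ p, p.Prime → p ∣ Φ.natAbs → p ∣ r ∧ ordCompl[p] r < p := by
    intro p hp hpΦ
    have := Fact.mk hp
    have hpΦ' : (p : ℤ) ∣ Φ := Int.natCast_dvd.mpr hpΦ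
    obtain ⟨k, hk1, hkr, hpk⟩ := hcon p hp (hpΦ.trans hΦdvd)
    refine ⟨dvd_of_dvd_cyclotomic_eval_of_pow_eq_one (by omega) hpΦ' hk1 hkr ?_,
      ordCompl_lt_of_dvd_cyclotomic_eval (by omega) hpΦ'⟩
    simpa using (ZMod.natCast_pow_eq_one_iff_dvd (by omega)).mpr hpk
  set q := Φ.natAbs.minFac
  have hq : q.Prime := Nat.minFac_prime hΦ.ne'
  have hqΦ : q ∣ Φ.natAbs := Nat.minFac_dvd _
  obtain ⟨hqr, hqlt⟩ := hfactor q hq hqΦ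
  have hΦq : Φ.natAbs ∣ q := by
    refine Nat.dvd_of_forall_prime_dvd_eq_of_not_sq_dvd (by omega) (fun p hp hpΦ => ?_)
      fun hsq => ?_
    · exact le_antisymm (hq.le_of_ordCompl_lt hp (by omega) (hfactor p hp hpΦ).1 hqlt)
        (Nat.minFac_le_of_dvd hp.two_le hpΦ)
    · exact not_sq_dvd_cyclotomic_eval hq hqr hr a (Int.natCast_dvd.mpr (by exact_mod_cast hsq))
  refine (Nat.le_of_dvd hq.pos hΦq).not_gt ?_
  rcases (show a = 2 ∨ 3 ≤ a by omega) with rfl | ha3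
  · exact lt_natAbs_cyclotomic_eval_two hq hqr (by omega) (by simpa using h)
      (Int.natCast_dvd.mpr hqΦ)
  · exact lt_natAbs_cyclotomic_eval_of_prime_dvd hq hqr (by omega) ha3
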